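/- Let c ≥ 0 be a real number and define h : (0,∞) → ℝ by h(ρ) = (cosh ρ + c)^(−1/2). Then for every ρ > 0: 2·( h''(ρ) + (cosh ρ / sinh ρ)·h'(ρ) ) / h(ρ) = −( 1/2 + c/(cosh ρ + c) + (3/2)·(1−c²)/(cosh ρ + c)² ). -/

import Mathlib

/-!
Write `u = cosh ρ + c`. For any exponent `p`, the chain rule gives `(u^p)' = p sinh ρ u^(p-1)` and
`(u^p)'' = p cosh ρ u^(p-1) + p(p-1) sinh² ρ u^(p-2)`, so the radial Laplacian of `u^p` is
`(2p cosh ρ / u + p(p-1) sinh² ρ / u²) u^p`. For `p = -1/2` one substitutes `cosh ρ = u - c` and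
`sinh² ρ = (u - c)² - 1`, and the quotient becomes a polynomial in `1/u`.
-/

open Real

noncomputable def radialLaplacian (h : ℝ → ℝ) (ρ : ℝ) : ℝ :=
  deriv (deriv h) ρ + cosh ρ / sinh ρ * deriv h ρ

lemma cosh_add_pos {c : ℝ} (hc : -1 < c) (t : ℝ) : 0 < cosh t + c := by
  linarith [one_le_cosh t]

lemma hasDerivAt_cosh_add_rpow {c : ℝ} (hc : -1 < c) (p t : ℝ) :
    HasDerivAt (fun t ↦ (cosh t + c) ^ p) (p * sinh t * (cosh t + c) ^ (p - 1)) t := by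
  convert ((hasDerivAt_cosh t).add_const c).rpow_const (Or.inl (cosh_add_pos hc t).ne') using 1
  ring

lemma deriv_cosh_add_rpow {c : ℝ} (hc : -1 < c) (p : ℝ) :
    deriv (fun t ↦ (cosh t + c) ^ p) = fun t ↦ p * sinh t * (cosh t + c) ^ (p - 1) :=
  funext fun t ↦ (hasDerivAt_cosh_add_rpow hc p t).deriv

lemma deriv_deriv_cosh_add_rpow {c : ℝ} (hc : -1 < c) (p t : ℝ) :
    deriv (deriv fun t ↦ (cosh t + c) ^ p) t
      = p * cosh t * (cosh t + c) ^ (p - 1)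
        + p * (p - 1) * sinh t ^ 2 * (cosh t + c) ^ (p - 2) := by
  have h : HasDerivAt (fun t ↦ p * sinh t * (cosh t + c) ^ (p - 1))
      (p * cosh t * (cosh t + c) ^ (p - 1)
        + p * sinh t * ((p - 1) * sinh t * (cosh t + c) ^ (p - 1 - 1))) t :=
    ((hasDerivAt_sinh t).const_mul p).mul (hasDerivAt_cosh_add_rpow hc (p - 1) t)
  rw [deriv_cosh_add_rpow hc, h.deriv, sub_sub, one_add_one_eq_two]
  ring

lemma radialLaplacian_cosh_add_rpow {c : ℝ} (hc : -1 < c) (p : ℝ) {ρ : ℝ} (hρ : sinh ρ ≠ 0) :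
    radialLaplacian (fun t ↦ (cosh t + c) ^ p) ρ
      = (2 * p * cosh ρ / (cosh ρ + c) + p * (p - 1) * sinh ρ ^ 2 / (cosh ρ + c) ^ 2)
        * (cosh ρ + c) ^ p := by
  have hu := cosh_add_pos hc ρ
  rw [radialLaplacian, deriv_deriv_cosh_add_rpow hc, (hasDerivAt_cosh_add_rpow hc p ρ).deriv,
    rpow_sub_one hu.ne', rpow_sub hu, rpow_two]
  field_simp
  ring

theorem radial_hyperbolic_laplacian_of_inverse_sqrt
    (c : ℝ) (hc : 0 ≤ c) :
    ∀ ρ : ℝ, 0 < ρ →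
      2 * (deriv (deriv (fun t : ℝ => (Real.cosh t + c) ^ (-(1 / 2) : ℝ))) ρ
            + (Real.cosh ρ / Real.sinh ρ)
                * deriv (fun t : ℝ => (Real.cosh t + c) ^ (-(1 / 2) : ℝ)) ρ)
          / (Real.cosh ρ + c) ^ (-(1 / 2) : ℝ)
        = -(1 / 2 + c / (Real.cosh ρ + c)
              + (3 / 2) * (1 - c ^ 2) / (Real.cosh ρ + c) ^ 2) := by
  intro ρ hρ
  have hc₁ : -1 < c := by linarith
  have hu := cosh_add_pos hc₁ ρ
  change 2 * radialLaplacian _ ρ / _ = _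
  rw [radialLaplacian_cosh_add_rpow hc₁ _ (sinh_pos_iff.2 hρ).ne',
    mul_div_assoc, mul_div_cancel_right₀ _ (rpow_pos_of_pos hu _).ne']
  have hsinh : sinh ρ ^ 2 = cosh ρ ^ 2 - 1 := by linarith [cosh_sq ρ]
  rw [hsinh]
  field_simp
  ring
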